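/- Let A be a finite left brace with Soc(A) = {0} and let X ⊆ A be a transitive cycle base of A, regarded as a cycle set with operation x·y := λ_x^{-1}(y). If I is an ideal of A, then the orbit relation of I on X, namely x ∼_I y :⇔ there exists a ∈ I with λ_a(x) = y, is a congruence of the cycle set X. -/

import Mathlib

/-- A left brace structure on an additive abelian group `A`: a group operation `mul`
(with identity `one` and inverses `inv`) satisfying `a ∘ (b + c) + a = a ∘ b + a ∘ c`. -/
structure LeftBrace (A : Type*) [AddCommGroup A] where
  mul : A → A → A
  one : A
  inv : A → A
  mul_assoc' : ∀ a b c, mul (mul a b) c = mul a (mul b c)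
  one_mul' : ∀ a, mul one a = a
  mul_one' : ∀ a, mul a one = a
  inv_mul' : ∀ a, mul (inv a) a = one
  mul_inv' : ∀ a, mul a (inv a) = one
  compat : ∀ a b c, mul a (b + c) + a = mul a b + mul a c

namespace LeftBrace

variable {A : Type*} [AddCommGroup A]

/-- The map `λ_a : b ↦ -a + a ∘ b`. -/
def lam (B : LeftBrace A) (a b : A) : A := -a + B.mul a b

/-- The cycle set operation `x · y := λ_x⁻¹ (y)` associated to a left brace. -/
noncomputable def cop (B : LeftBrace A) (x y : A) : A :=
  @Function.invFun A A ⟨0⟩ (B.lam x) y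

/-- An ideal of a left brace: a normal subgroup of `(A, ∘)` invariant under all `λ_a`. -/
def IsIdeal (B : LeftBrace A) (I : Set A) : Prop :=
  B.one ∈ I ∧ (∀ a ∈ I, ∀ b ∈ I, B.mul a b ∈ I) ∧ (∀ a ∈ I, B.inv a ∈ I) ∧
    (∀ g : A, ∀ a ∈ I, B.mul (B.mul g a) (B.inv g) ∈ I) ∧
    (∀ g : A, ∀ a ∈ I, B.lam g a ∈ I)

end LeftBrace

/-!
The relation is the orbit relation of the subgroup `I` of `(A, ∘)` acting through `λ`, hence an
equivalence. For compatibility, the key fact is that `λ_b x = y` with `b ∈ I` forces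
`y⁻¹ ∘ x ∈ I`: normality of `I` gives `x - λ_b x ∈ I`, and `y⁻¹ ∘ x = λ_{y⁻¹} (x - y)`.
Given moreover `λ_c u = v` with `c ∈ I`, the element `a := y⁻¹ ∘ c ∘ x` lies in `I` and satisfies
`y ∘ a = c ∘ x`, so `λ_y (λ_a (x · u)) = λ_c (λ_x (x · u)) = λ_c u = v = λ_y (y · v)`.
-/

namespace LeftBrace

variable {A : Type*} [AddCommGroup A]

section Basic

variable (B : LeftBrace A)

lemma mul_zero' (a : A) : B.mul a 0 = a := by
  have h := B.compat a 0 0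
  rw [add_zero] at h
  exact (add_left_cancel h).symm

lemma one_eq_zero : B.one = 0 := by
  simpa only [B.one_mul'] using (B.mul_zero' B.one).symm

lemma inv_inv' (a : A) : B.inv (B.inv a) = a := by
  have h : B.mul (B.mul (B.inv (B.inv a)) (B.inv a)) a = a := by
    rw [B.inv_mul', B.one_mul']
  rwa [B.mul_assoc', B.inv_mul', B.mul_one'] at h

lemma mul_inv_mul_cancel' (a b : A) : B.mul a (B.mul (B.inv a) b) = b := by
  rw [← B.mul_assoc', B.mul_inv', B.one_mul']

lemma mul_eq_add_lam (a b : A) : B.mul a b = a + B.lam a b := by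
  unfold lam; abel

lemma mul_sub_add (a b c : A) : B.mul a (b - c) = B.mul a b + a - B.mul a c := by
  have h := B.compat a (b - c) c
  rw [sub_add_cancel] at h
  rw [eq_sub_iff_add_eq, h]

lemma lam_mul (a b c : A) : B.lam (B.mul a b) c = B.lam a (B.lam b c) := by
  unfold lam
  rw [B.mul_assoc', neg_add_eq_sub b, B.mul_sub_add]; abel

lemma lam_zero (b : A) : B.lam 0 b = b := by
  unfold lam
  rw [← B.one_eq_zero, B.one_mul', B.one_eq_zero]; abel

lemma lam_lam_inv (a b : A) : B.lam a (B.lam (B.inv a) b) = b := by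
  rw [← B.lam_mul, B.mul_inv', B.one_eq_zero, B.lam_zero]

lemma lam_inv_lam (a b : A) : B.lam (B.inv a) (B.lam a b) = b := by
  rw [← B.lam_mul, B.inv_mul', B.one_eq_zero, B.lam_zero]

lemma lam_injective (a : A) : Function.Injective (B.lam a) :=
  Function.LeftInverse.injective (B.lam_inv_lam a)

lemma lam_surjective (a : A) : Function.Surjective (B.lam a) :=
  Function.RightInverse.surjective (B.lam_lam_inv a)

lemma lam_inv_self (a : A) : B.lam a (B.inv a) = -a := by
  rw [lam, B.mul_inv', B.one_eq_zero, add_zero]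

lemma inv_mul_eq_lam_inv_sub (x y : A) : B.mul (B.inv y) x = B.lam (B.inv y) (x - y) := by
  rw [lam, B.mul_sub_add, B.inv_mul', B.one_eq_zero]; abel

lemma lam_cop (x u : A) : B.lam x (B.cop x u) = u :=
  have : Nonempty A := ⟨0⟩
  Function.rightInverse_invFun (B.lam_surjective x) u

end Basic

def OrbitRel (B : LeftBrace A) (I : Set A) (x y : A) : Prop :=
  ∃ a ∈ I, B.lam a x = y

namespace IsIdeal

variable {B : LeftBrace A} {I : Set A}

lemma zero_mem (hI : B.IsIdeal I) : (0 : A) ∈ I :=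
  B.one_eq_zero ▸ hI.1

lemma mul_mem (hI : B.IsIdeal I) {a b : A} (ha : a ∈ I) (hb : b ∈ I) :
    B.mul a b ∈ I :=
  hI.2.1 a ha b hb

lemma inv_mem (hI : B.IsIdeal I) {a : A} (ha : a ∈ I) : B.inv a ∈ I :=
  hI.2.2.1 a ha

lemma inv_conj_mem (hI : B.IsIdeal I) (g : A) {a : A} (ha : a ∈ I) :
    B.mul (B.mul (B.inv g) a) g ∈ I := by
  simpa only [B.inv_inv'] using hI.2.2.2.1 (B.inv g) a ha

lemma lam_mem (hI : B.IsIdeal I) (g : A) {a : A} (ha : a ∈ I) : B.lam g a ∈ I :=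
  hI.2.2.2.2 g a ha

lemma neg_mem (hI : B.IsIdeal I) {a : A} (ha : a ∈ I) : -a ∈ I :=
  B.lam_inv_self a ▸ hI.lam_mem a (hI.inv_mem ha)

lemma add_mem (hI : B.IsIdeal I) {a b : A} (ha : a ∈ I) (hb : b ∈ I) : a + b ∈ I := by
  have h : B.mul a (B.lam (B.inv a) b) = a + b := by
    rw [B.mul_eq_add_lam, B.lam_lam_inv]
  exact h ▸ hI.mul_mem ha (hI.lam_mem _ hb)

lemma sub_lam_mem (hI : B.IsIdeal I) {b : A} (hb : b ∈ I) (x : A) :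
    x - B.lam b x ∈ I := by
  obtain ⟨b', hb', hbx⟩ : ∃ b' ∈ I, B.mul b x = B.mul x b' :=
    ⟨_, hI.inv_conj_mem x hb, by rw [B.mul_assoc', B.mul_inv_mul_cancel']⟩
  have h : x - B.lam b x = b + -B.lam x b' := by
    rw [lam, hbx, B.mul_eq_add_lam x b']; abel
  exact h ▸ hI.add_mem hb (hI.neg_mem (hI.lam_mem x hb'))

lemma inv_mul_mem_of_lam_eq (hI : B.IsIdeal I) {b x y : A} (hb : b ∈ I)
    (hxy : B.lam b x = y) : B.mul (B.inv y) x ∈ I := by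
  rw [B.inv_mul_eq_lam_inv_sub, ← hxy]
  exact hI.lam_mem _ (hI.sub_lam_mem hb x)

lemma orbitRel_refl (hI : B.IsIdeal I) (x : A) : B.OrbitRel I x x :=
  ⟨0, hI.zero_mem, B.lam_zero x⟩

lemma orbitRel_symm (hI : B.IsIdeal I) {x y : A} : B.OrbitRel I x y → B.OrbitRel I y x
  | ⟨a, ha, hax⟩ => ⟨B.inv a, hI.inv_mem ha, by rw [← hax, B.lam_inv_lam]⟩

lemma orbitRel_trans (hI : B.IsIdeal I) {x y z : A} :
    B.OrbitRel I x y → B.OrbitRel I y z → B.OrbitRel I x z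
  | ⟨a, ha, hax⟩, ⟨b, hb, hby⟩ => ⟨B.mul b a, hI.mul_mem hb ha, by rw [B.lam_mul, hax, hby]⟩

lemma orbitRel_cop (hI : B.IsIdeal I) {x y u v : A} :
    B.OrbitRel I x y → B.OrbitRel I u v → B.OrbitRel I (B.cop x u) (B.cop y v)
  | ⟨b, hb, hbx⟩, ⟨c, hc, hcu⟩ => by
    have haI : B.mul (B.mul (B.mul (B.inv y) c) y) (B.mul (B.inv y) x) ∈ I :=
      hI.mul_mem (hI.inv_conj_mem y hc) (hI.inv_mul_mem_of_lam_eq hb hbx)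
    have hya : B.mul y (B.mul (B.mul (B.mul (B.inv y) c) y) (B.mul (B.inv y) x)) = B.mul c x := by
      rw [B.mul_assoc', B.mul_assoc', B.mul_inv_mul_cancel', B.mul_inv_mul_cancel']
    refine ⟨_, haI, B.lam_injective y ?_⟩
    rw [← B.lam_mul, hya, B.lam_mul, B.lam_cop, B.lam_cop, hcu]

end IsIdeal

end LeftBrace

theorem stmt8_general {A : Type*} [AddCommGroup A] (B : LeftBrace A)
    (X : Set A)
    -- I is an ideal of A
    (I : Set A) (hI : B.IsIdeal I) :
    -- the orbit relation of I on X is a congruence of the cycle set X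
    (∀ x ∈ X, ∃ a ∈ I, B.lam a x = x) ∧
    (∀ x ∈ X, ∀ y ∈ X, (∃ a ∈ I, B.lam a x = y) → ∃ a ∈ I, B.lam a y = x) ∧
    (∀ x ∈ X, ∀ y ∈ X, ∀ z ∈ X,
      (∃ a ∈ I, B.lam a x = y) → (∃ a ∈ I, B.lam a y = z) → ∃ a ∈ I, B.lam a x = z) ∧
    (∀ x ∈ X, ∀ y ∈ X, ∀ u ∈ X, ∀ v ∈ X,
      (∃ a ∈ I, B.lam a x = y) → (∃ a ∈ I, B.lam a u = v) →
      ∃ a ∈ I, B.lam a (B.cop x u) = B.cop y v) :=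
  ⟨fun x _ => hI.orbitRel_refl x,
    fun _ _ _ _ => hI.orbitRel_symm,
    fun _ _ _ _ _ _ => hI.orbitRel_trans,
    fun _ _ _ _ _ _ _ _ => hI.orbitRel_cop⟩

theorem stmt8 {A : Type*} [AddCommGroup A] [Finite A] (B : LeftBrace A)
    -- Soc(A) = {0}
    (hsoc : {a : A | ∀ b, a + b = B.mul a b} = {0})
    -- X is a transitive cycle base: an orbit of the λ-action generating (A, +)
    (X : Set A) (hne : X.Nonempty)
    (hclosed : ∀ a : A, ∀ x ∈ X, B.lam a x ∈ X)
    (horbit : ∀ x ∈ X, ∀ y ∈ X, ∃ a : A, B.lam a x = y)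
    (hgen : AddSubgroup.closure X = ⊤)
    -- I is an ideal of A
    (I : Set A) (hI : B.IsIdeal I) :
    -- the orbit relation of I on X is a congruence of the cycle set X
    (∀ x ∈ X, ∃ a ∈ I, B.lam a x = x) ∧
    (∀ x ∈ X, ∀ y ∈ X, (∃ a ∈ I, B.lam a x = y) → ∃ a ∈ I, B.lam a y = x) ∧
    (∀ x ∈ X, ∀ y ∈ X, ∀ z ∈ X,
      (∃ a ∈ I, B.lam a x = y) → (∃ a ∈ I, B.lam a y = z) → ∃ a ∈ I, B.lam a x = z) ∧
    (∀ x ∈ X, ∀ y ∈ X, ∀ u ∈ X, ∀ v ∈ X,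
      (∃ a ∈ I, B.lam a x = y) → (∃ a ∈ I, B.lam a u = v) →
      ∃ a ∈ I, B.lam a (B.cop x u) = B.cop y v) :=
  stmt8_general B X I hI
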